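/- arXiv:1105.4274 — 3 statements merged into one kernel-verified Lean document; each statement's English description precedes it below -/
import Mathlib

section
/- If a sequence {x_n : n ≥ 1} of finite binary strings satisfies ∑_{n=1}^∞ 2^{-l(x_n)} < ∞ and an infinite binary sequence ω has x_n as a prefix for infinitely many n, then ω is not Martin-Löf random with respect to the uniform measure. -/
open MeasureTheory Filter Asymptotics
open scoped ENNReal

/-- The length-`n` prefix of an infinite binary sequence, as a list. -/
def pref (ω : ℕ → Bool) (n : ℕ) : List Bool := (List.range n).map ω

/-- `a` is a (finite) prefix of the infinite sequence `ω`. -/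
def PrefixOf (a : List Bool) (ω : ℕ → Bool) : Prop := pref ω a.length = a

/-- The cylinder set of infinite sequences extending the string `x`. -/
def Cyl (x : List Bool) : Set (ℕ → Bool) := {ω | PrefixOf x ω}

/-- Plain Kolmogorov complexity of `x` with respect to a decoding function `U`. -/
noncomputable def PC (U : List Bool →. List Bool) (x : List Bool) : ℕ :=
  sInf {n | ∃ p : List Bool, p.length = n ∧ x ∈ U p}

/-- `U` is an optimal (universal) partial computable decoding function for plain complexity. -/
def PlainOptimal (U : List Bool →. List Bool) : Prop :=
  Partrec U ∧
    ∀ V : List Bool →. List Bool, Partrec V → ∃ c : ℕ, ∀ x p : List Bool,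
      x ∈ V p → PC U x ≤ p.length + c

/-- An r.e. monotone machine representation: `R p x` means that on program `p`
the machine (eventually) outputs an extension of `x`. -/
def MonotoneRepr (R : List Bool → List Bool → Prop) : Prop :=
  REPred (fun q : List Bool × List Bool => R q.1 q.2) ∧
  (∀ p x p' x', R p x → R p' x' → p <+: p' → (x <+: x' ∨ x' <+: x)) ∧
  (∀ p x x', R p x → x' <+: x → R p x')

/-- Monotone complexity with respect to a monotone machine representation `R`. -/
noncomputable def KmR (R : List Bool → List Bool → Prop) (x : List Bool) : ℕ :=
  sInf {n | ∃ p : List Bool, p.length = n ∧ R p x}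

/-- `R` is an optimal monotone machine, so `KmR R` is the monotone complexity `Km`. -/
def MonotoneOptimal (R : List Bool → List Bool → Prop) : Prop :=
  MonotoneRepr R ∧
    ∀ R', MonotoneRepr R' → ∃ c : ℕ, ∀ x p : List Bool, R' p x → KmR R x ≤ p.length + c

/-- ω is Martin-Löf random w.r.t. the measure μ: it escapes every Martin-Löf test,
a test being a computable family of (effectively open) unions of cylinders of measure ≤ 2^{-n}. -/
def MLRandom (μ : Measure (ℕ → Bool)) (ω : ℕ → Bool) : Prop :=
  ∀ f : ℕ → ℕ → List Bool, Computable₂ f →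
    (∀ n : ℕ, μ (⋃ i, Cyl (f n i)) ≤ (2 : ℝ≥0∞)⁻¹ ^ n) →
    ∃ n : ℕ, ω ∉ ⋃ i, Cyl (f n i)

/-! If `∑' j, μ (Cyl (x j)) ≤ 2 ^ N`, Markov's inequality for the counting function
`cylCount x ω = #{j | ω ∈ Cyl (x j)}` shows that the sequences lying in at least
`2 ^ (N + n + 1)` of these cylinders form a set of measure at most `2⁻¹ ^ (n + 1)`. That set is
effectively open: it is the union of the cylinders `Cyl σ` over the strings `σ` extending at least
`2 ^ (N + n + 1)` of the `x j`, and such `σ` can be enumerated. A sequence extending infinitely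
many `x j` lies in every level of the resulting Martin-Löf test. -/

open Finset Encodable

theorem pref_take {m n : ℕ} (h : m ≤ n) (ω : ℕ → Bool) : pref ω m = (pref ω n).take m := by
  simp [pref, ← List.map_take, List.take_range, Nat.min_eq_left h]

theorem PrefixOf.isPrefix_pref {a : List Bool} {ω : ℕ → Bool} (ha : PrefixOf a ω) {n : ℕ}
    (hn : a.length ≤ n) : a <+: pref ω n := by
  rw [List.prefix_iff_eq_take, ← pref_take hn, ha]

theorem PrefixOf.of_isPrefix {a b : List Bool} {ω : ℕ → Bool} (hb : PrefixOf b ω)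
    (hab : a <+: b) : PrefixOf a ω := by
  rw [PrefixOf, pref_take hab.length_le, hb, ← List.prefix_iff_eq_take.mp hab]

theorem prefixOf_pref (ω : ℕ → Bool) (n : ℕ) : PrefixOf (pref ω n) ω := by
  simp [PrefixOf, pref]

theorem cyl_eq_iInter (a : List Bool) : Cyl a = ⋂ k : Fin a.length, {ω | ω k = a[k]} := by
  ext ω
  simp [Cyl, PrefixOf, pref, List.ext_getElem_iff, eq_comm, Fin.forall_iff]

theorem measurableSet_cyl (a : List Bool) : MeasurableSet (Cyl a) := by
  rw [cyl_eq_iInter]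
  exact .iInter fun k => measurable_pi_apply _ (measurableSet_singleton _)

theorem measurable_indicator_cyl (a : List Bool) :
    Measurable ((Cyl a).indicator (1 : (ℕ → Bool) → ℝ≥0∞)) :=
  measurable_one.indicator (measurableSet_cyl a)

noncomputable def cylCount (x : ℕ → List Bool) (ω : ℕ → Bool) : ℝ≥0∞ :=
  ∑' j, (Cyl (x j)).indicator 1 ω

theorem measurable_cylCount (x : ℕ → List Bool) : Measurable (cylCount x) :=
  Measurable.tsum (f := fun j => (Cyl (x j)).indicator 1) fun j => measurable_indicator_cyl (x j)

theorem lintegral_cylCount (μ : Measure (ℕ → Bool)) (x : ℕ → List Bool) :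
    ∫⁻ ω, cylCount x ω ∂μ = ∑' j, μ (Cyl (x j)) := by
  simp only [cylCount]
  rw [lintegral_tsum (f := fun j => (Cyl (x j)).indicator 1)
    fun j => (measurable_indicator_cyl (x j)).aemeasurable]
  exact tsum_congr fun j => lintegral_indicator_one (measurableSet_cyl _)

theorem measure_two_pow_le_cylCount {μ : Measure (ℕ → Bool)} {x : ℕ → List Bool} {N : ℕ}
    (hN : ∑' j, μ (Cyl (x j)) ≤ 2 ^ N) (m : ℕ) :
    μ {ω | 2 ^ (N + m) ≤ cylCount x ω} ≤ 2⁻¹ ^ m := by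
  have hmarkov := mul_meas_ge_le_lintegral₀ (μ := μ) (measurable_cylCount x).aemeasurable
    (2 ^ (N + m))
  rw [lintegral_cylCount] at hmarkov
  have h2N : (2 : ℝ≥0∞) ^ N * (2 ^ m * μ {ω | 2 ^ (N + m) ≤ cylCount x ω}) ≤ 2 ^ N * 1 := by
    rw [mul_one, ← mul_assoc, ← pow_add]; exact hmarkov.trans hN
  rw [← ENNReal.inv_pow, ENNReal.le_inv_iff_mul_le, mul_comm]
  exact (ENNReal.mul_le_mul_iff_right (by positivity) (by simp)).1 h2N

theorem computable₂_sum_range {α : Type*} [Primcodable α] {f : α → ℕ → ℕ}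
    (hf : Computable₂ f) : Computable₂ fun a k => ∑ j ∈ range k, f a j := by
  refine (Computable.nat_rec (f := fun p : α × ℕ => p.2) (g := fun _ => 0)
    (h := fun p q => q.2 + f p.1 q.1) .snd (.const 0)
    ((Primrec.nat_add.to_comp.comp (Computable.snd.comp .snd)
      (hf.comp (Computable.fst.comp .fst) (Computable.fst.comp .snd))).to₂)).of_eq ?_
  rintro ⟨a, k⟩
  induction k with
  | zero => rfl
  | succ k ih => exact (congrArg (· + f a k) ih).trans (sum_range_succ _ k).symm

theorem primrec₂_decide_isPrefix {α : Type*} [Primcodable α] [DecidableEq α] :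
    Primrec₂ fun a b : List α => decide (a <+: b) :=
  (Primrec.eq.decide.comp (Primrec.list_take.comp (Primrec.list_length.comp .fst) .snd)
    .fst).of_eq fun p => by
      simp only [List.prefix_iff_eq_take, eq_comm]

def prefixCount (x : ℕ → List Bool) (k : ℕ) (σ : List Bool) : ℕ :=
  ∑ j ∈ range k, if x j <+: σ then 1 else 0

theorem computable_prefixCount {x : ℕ → List Bool} (hx : Computable x) :
    Computable fun p : ℕ × List Bool => prefixCount x p.1 p.2 := by
  have h : Computable₂ fun (σ : List Bool) (j : ℕ) => if x j <+: σ then 1 else 0 :=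
    (Computable.cond (primrec₂_decide_isPrefix.to_comp.comp (hx.comp .snd) .fst)
      (.const 1) (.const 0)).of_eq fun p => by simp only [Bool.cond_decide]
  exact (computable₂_sum_range h).comp .snd .fst

theorem card_le_prefixCount {x : ℕ → List Bool} {k : ℕ} {σ : List Bool} {T : Finset ℕ}
    (hT : T ⊆ range k) (hprefix : ∀ j ∈ T, x j <+: σ) : #T ≤ prefixCount x k σ := by
  rw [prefixCount, ← card_filter]
  exact card_le_card fun j hj => mem_filter.2 ⟨hT hj, hprefix j hj⟩

theorem prefixCount_le_cylCount {x : ℕ → List Bool} {σ : List Bool} {ω : ℕ → Bool}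
    (hω : ω ∈ Cyl σ) (k : ℕ) : (prefixCount x k σ : ℝ≥0∞) ≤ cylCount x ω :=
  calc (prefixCount x k σ : ℝ≥0∞) = ∑ j ∈ range k, if x j <+: σ then 1 else 0 := by
        simp [prefixCount]
    _ ≤ ∑ j ∈ range k, (Cyl (x j)).indicator 1 ω := by
        refine sum_le_sum fun j _ => ?_
        split_ifs with h
        · simp [Set.indicator_of_mem (show ω ∈ Cyl (x j) from PrefixOf.of_isPrefix hω h)]
        · exact zero_le
    _ ≤ cylCount x ω := ENNReal.sum_le_tsum _

/-- The index `i` codes a candidate pair `(k, σ)`. A rejected candidate still has to produce a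
string; it produces one of length `n + i + 2`, and these have total measure `2⁻¹ ^ (n + 1)`. -/
def solovayMLTest (x : ℕ → List Bool) (N n i : ℕ) : List Bool :=
  let p := (decode (α := ℕ × List Bool) i).getD (0, [])
  if 2 ^ (N + n + 1) ≤ prefixCount x p.1 p.2 then p.2 else List.replicate (n + i + 2) false

theorem computable₂_solovayMLTest {x : ℕ → List Bool} (hx : Computable x) (N : ℕ) :
    Computable₂ (solovayMLTest x N) := by
  have hp : Computable fun q : ℕ × ℕ => (decode (α := ℕ × List Bool) q.2).getD (0, []) :=
    Computable.option_getD (Computable.decode.comp .snd) (.const _)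
  have hpow : Primrec fun q : ℕ × ℕ => 2 ^ (N + q.1 + 1) :=
    (Primrec₂.unpaired'.1 Nat.Primrec.pow).comp (.const 2)
      (Primrec.succ.comp (Primrec.nat_add.comp (.const N) .fst))
  have hjunk : Primrec fun q : ℕ × ℕ => List.replicate (q.1 + q.2 + 2) false :=
    (Primrec.list_map (Primrec.list_range.comp
      (Primrec.nat_add.comp (Primrec.nat_add.comp .fst .snd) (.const 2)))
      (Primrec₂.const false)).of_eq fun q => by simp [List.map_const']
  exact (Computable.cond
    (Primrec.nat_le.decide.to_comp.comp hpow.to_comp ((computable_prefixCount hx).comp hp))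
    (Computable.snd.comp hp) hjunk.to_comp).of_eq fun q => by
      simp only [solovayMLTest, Bool.cond_decide]

theorem tsum_inv_two_pow_add_two (n : ℕ) :
    ∑' i : ℕ, (2⁻¹ : ℝ≥0∞) ^ (n + i + 2) = 2⁻¹ ^ (n + 1) := by
  simp_rw [show ∀ i, n + i + 2 = (n + 1) + (i + 1) from fun i => by ring,
    pow_add (2⁻¹ : ℝ≥0∞) (n + 1), ENNReal.tsum_mul_left, ENNReal.tsum_geometric_add_one,
    ENNReal.one_sub_inv_two, inv_inv, ENNReal.inv_mul_cancel (a := 2) (by norm_num) (by norm_num), mul_one]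

theorem measure_iUnion_solovayMLTest_le {μ : Measure (ℕ → Bool)}
    (hμ : ∀ a : List Bool, μ (Cyl a) = 2⁻¹ ^ a.length) {x : ℕ → List Bool} {N : ℕ}
    (hN : ∑' j, μ (Cyl (x j)) ≤ 2 ^ N) (n : ℕ) :
    μ (⋃ i, Cyl (solovayMLTest x N n i)) ≤ 2⁻¹ ^ n := by
  have hsub : (⋃ i, Cyl (solovayMLTest x N n i)) ⊆
      {ω | 2 ^ (N + (n + 1)) ≤ cylCount x ω} ∪ ⋃ i, Cyl (List.replicate (n + i + 2) false) := by
    refine Set.iUnion_subset fun i ω hω => ?_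
    simp only [solovayMLTest] at hω
    split_ifs at hω with h
    · left
      rw [Set.mem_ofPred_eq, ← add_assoc]
      exact le_trans (by exact_mod_cast h) (prefixCount_le_cylCount hω _)
    · exact Or.inr (Set.mem_iUnion_of_mem i hω)
  calc μ (⋃ i, Cyl (solovayMLTest x N n i))
      ≤ μ {ω | 2 ^ (N + (n + 1)) ≤ cylCount x ω} +
          ∑' i, μ (Cyl (List.replicate (n + i + 2) false)) :=
        (measure_mono hsub).trans
          ((measure_union_le _ _).trans (by gcongr; exact measure_iUnion_le _))
    _ ≤ 2⁻¹ ^ (n + 1) + 2⁻¹ ^ (n + 1) := by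
        gcongr
        · exact measure_two_pow_le_cylCount hN _
        · simp only [hμ, List.length_replicate, tsum_inv_two_pow_add_two, le_refl]
    _ = 2⁻¹ ^ n := by rw [pow_succ, ← mul_add, ENNReal.inv_two_add_inv_two, mul_one]

theorem mem_iUnion_solovayMLTest {x : ℕ → List Bool} {ω : ℕ → Bool}
    (hio : {j | PrefixOf (x j) ω}.Infinite) (N n : ℕ) :
    ω ∈ ⋃ i, Cyl (solovayMLTest x N n i) := by
  obtain ⟨T, hTω, hTcard⟩ := hio.exists_subset_card_eq (2 ^ (N + n + 1))
  set k := T.sup id + 1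
  set σ := pref ω (T.sup fun j => (x j).length)
  have hcount : 2 ^ (N + n + 1) ≤ prefixCount x k σ :=
    hTcard ▸ card_le_prefixCount
      (fun j hj => mem_range.2 (Nat.lt_succ_of_le (le_sup (f := id) hj)))
      fun j hj => (hTω hj).isPrefix_pref (le_sup (f := fun j => (x j).length) hj)
  refine Set.mem_iUnion.2 ⟨encode (k, σ), ?_⟩
  simp only [solovayMLTest, encodek, Option.getD_some, hcount, if_true]
  exact prefixOf_pref ω _

theorem exists_tsum_measure_cyl_le_two_pow {μ : Measure (ℕ → Bool)}
    (hμ : ∀ a : List Bool, μ (Cyl a) = 2⁻¹ ^ a.length) {x : ℕ → List Bool}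
    (hsum : Summable fun j => (2 : ℝ) ^ (-((x j).length : ℤ))) :
    ∃ N : ℕ, ∑' j, μ (Cyl (x j)) ≤ 2 ^ N := by
  have hfin : ∑' j, μ (Cyl (x j)) ≠ ∞ := by
    have h : ∀ j, μ (Cyl (x j)) = ENNReal.ofReal ((2 : ℝ) ^ (-((x j).length : ℤ))) := fun j => by
      rw [hμ, zpow_neg, zpow_natCast, ENNReal.ofReal_inv_of_pos (by positivity),
        ENNReal.ofReal_pow zero_le_two, ENNReal.ofReal_ofNat, ENNReal.inv_pow]
    rw [tsum_congr h, ← ENNReal.ofReal_tsum_of_nonneg (fun j => by positivity) hsum]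
    exact ENNReal.ofReal_ne_top
  obtain ⟨N, hN⟩ := ENNReal.exists_nat_gt hfin
  exact ⟨N, hN.le.trans (by exact_mod_cast (Nat.lt_two_pow_self).le)⟩

/-- failing a Solovay test implies non-Martin-Löf-randomness. -/
theorem stmt_2 (μ : Measure (ℕ → Bool)) (hμ : ∀ x : List Bool, μ (Cyl x) = (2 : ℝ≥0∞)⁻¹ ^ x.length)
    (x : ℕ → List Bool) (hx : Computable x)
    (hsum : Summable fun n => (2 : ℝ) ^ (-((x n).length : ℤ)))
    (ω : ℕ → Bool) (hio : {n | PrefixOf (x n) ω}.Infinite) :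
    ¬ MLRandom μ ω := by
  intro hrandom
  obtain ⟨N, hN⟩ := exists_tsum_measure_cyl_le_two_pow hμ hsum
  obtain ⟨n, hn⟩ := hrandom _ (computable₂_solovayMLTest hx N)
    (measure_iUnion_solovayMLTest_le hμ hN)
  exact hn (mem_iUnion_solovayMLTest hio N n)
end

section
/- Let ρ be a computable unbounded nondecreasing function with ρ(n) = o(n). Then every infinite binary sequence ω satisfying Km(ω^n) ≥ n − ρ(n) − O(1) obeys the strong law of large numbers: lim_{n→∞} (1/n) ∑_{i=1}^n ω_i = 1/2. -/
open MeasureTheory Filter Asymptotics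
open scoped ENNReal

/-!
If some bit had frequency at least `1/2 + 1/(2m)` in infinitely many prefixes `ω^n`, these prefixes
would be compressible. By Chernoff's bound there are at most `2 ^ (n + 1 - n / M)` such strings
of length `n`, for some `M` depending only on `m`, and they can be listed computably; so each of
them is described by `n` (in a self-delimiting code of `O(log n)` bits) followed by its index in
the list. Hence `Km(ω^n) ≤ n - n / M + O(log n)` for infinitely many `n`, against
`Km(ω^n) ≥ n - ρ(n) - O(1)` with `ρ(n) = o(n)`.
-/

namespace SLLN

def ofBits (l : List Bool) : ℕ := l.foldr Nat.bit 0

def toBits (k n : ℕ) : List Bool := (List.range k).map fun i => (n / 2 ^ i).bodd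

@[simp] lemma length_toBits (k n : ℕ) : (toBits k n).length = k := by simp [toBits]

lemma toBits_succ (k n : ℕ) : toBits (k + 1) n = n.bodd :: toBits k (n / 2) := by
  simp [toBits, List.range_succ_eq_map, Nat.pow_succ', Nat.div_div_eq_div_mul]

lemma ofBits_toBits {k n : ℕ} (h : n < 2 ^ k) : ofBits (toBits k n) = n := by
  induction k generalizing n with
  | zero => simp_all [toBits, ofBits]
  | succ k ih =>
    have hdiv : n / 2 < 2 ^ k := Nat.div_lt_of_lt_mul (by rwa [← Nat.pow_succ'])
    rw [toBits_succ, ofBits, List.foldr_cons, ← ofBits, ih hdiv, ← Nat.div2_val,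
      Nat.bit_bodd_div2]

def allStrings : ℕ → List (List Bool)
  | 0 => [[]]
  | n + 1 => (allStrings n).map (false :: ·) ++ (allStrings n).map (true :: ·)

lemma mem_allStrings {n : ℕ} {x : List Bool} : x ∈ allStrings n ↔ x.length = n := by
  induction n generalizing x with
  | zero => simp [allStrings, List.length_eq_zero_iff]
  | succ n ih =>
    cases x with
    | nil => simp [allStrings]
    | cons b y => cases b <;> simp [allStrings, ih]

lemma sum_pow_count_allStrings (t : ℝ) (b : Bool) (n : ℕ) :
    ((allStrings n).map fun x => t ^ x.count b).sum = (1 + t) ^ n := by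
  induction n with
  | zero => simp [allStrings]
  | succ n ih =>
    cases b <;>
      simp [allStrings, Function.comp_def, pow_succ, List.sum_map_mul_right, ih]
      <;> ring

/-- Markov's inequality for `t ^ count b`, whose sum over the strings of length `n` is
`(1 + t) ^ n`. -/
lemma length_filter_mul_rpow_le {t : ℝ} (ht : 1 ≤ t) (a : ℝ) (b : Bool) (n : ℕ) :
    (((allStrings n).filter fun x => a * n ≤ x.count b).length : ℝ) * t ^ (a * n)
      ≤ (1 + t) ^ n := by
  set S := (allStrings n).filter fun x => a * n ≤ x.count b
  calc (S.length : ℝ) * t ^ (a * n) = S.length • t ^ (a * n) := by rw [nsmul_eq_mul]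
    _ ≤ (S.map fun x => t ^ x.count b).sum := by
        rw [← List.length_map (f := fun x => t ^ x.count b)]
        refine List.card_nsmul_le_sum _ _ fun y hy => ?_
        obtain ⟨x, hx, rfl⟩ := List.mem_map.1 hy
        rw [← Real.rpow_natCast]
        exact Real.rpow_le_rpow_of_exponent_le ht (by simpa using (List.mem_filter.1 hx).2)
    _ ≤ ((allStrings n).map fun x => t ^ x.count b).sum :=
        (List.filter_sublist.map _).sum_le_sum fun _ hy => by
          obtain ⟨x, -, rfl⟩ := List.mem_map.1 hy
          exact pow_nonneg (by linarith) _
    _ = (1 + t) ^ n := sum_pow_count_allStrings t b n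

lemma exists_one_add_lt_two_mul_rpow {a : ℝ} (ha : 1 / 2 < a) :
    ∃ t : ℝ, 1 < t ∧ 1 + t < 2 * t ^ a := by
  rcases le_or_gt 1 a with ha1 | ha1
  · refine ⟨2, by norm_num, ?_⟩
    have : (2 : ℝ) ≤ 2 ^ a := by simpa using Real.rpow_le_rpow_of_exponent_le one_le_two ha1
    linarith
  set t := 1 / (2 * (1 - a))
  have ht : 1 < t := by rw [lt_div_iff₀] <;> linarith
  have hat : (1 - a) * t = 1 / 2 := by
    simp only [t]
    field_simp [show 1 - a ≠ 0 by linarith]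
  refine ⟨t, ht, ?_⟩
  -- weighted AM-GM for `t⁻¹` and `1` gives `t ≤ (a + (1 - a) t) t ^ a = (a + 1/2) t ^ a`
  have amgm := Real.geom_mean_le_arith_mean2_weighted (p₁ := t⁻¹) (p₂ := 1) (w₁ := a)
    (w₂ := 1 - a) (by linarith) (by linarith) (by positivity) zero_le_one (by ring)
  rw [Real.one_rpow, mul_one, Real.inv_rpow (by positivity)] at amgm
  have hta : 0 < t ^ a := by positivity
  have hlow : t ≤ (a + 1 / 2) * t ^ a := by
    rw [inv_le_iff_one_le_mul₀ hta] at amgm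
    have := mul_le_mul_of_nonneg_left amgm (by positivity : (0 : ℝ) ≤ t)
    field_simp at this
    nlinarith
  have h2a : 2 * a < t := by
    rw [lt_div_iff₀ (by linarith)]
    nlinarith
  nlinarith

theorem exists_length_filter_le_pow {a : ℝ} (ha : 1 / 2 < a) :
    ∃ q : ℝ, 0 ≤ q ∧ q < 2 ∧ ∀ b n,
      (((allStrings n).filter fun x => a * n ≤ x.count b).length : ℝ) ≤ q ^ n := by
  obtain ⟨t, ht, hlt⟩ := exists_one_add_lt_two_mul_rpow ha
  have hta : 0 < t ^ a := by positivity
  refine ⟨(1 + t) / t ^ a, by positivity, by rwa [div_lt_iff₀ hta], fun b n => ?_⟩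
  rw [div_pow, le_div_iff₀ (by positivity), ← Real.rpow_mul_natCast (by positivity)]
  exact length_filter_mul_rpow_le ht.le a b n

open Primrec in
lemma primrec_allStrings : Primrec allStrings := by
  have step : Primrec₂ fun (_ : ℕ) (l : List (List Bool)) =>
      l.map (false :: ·) ++ l.map (true :: ·) :=
    (list_append.comp (list_map snd (list_cons.comp (const false) snd).to₂)
      (list_map snd (list_cons.comp (const true) snd).to₂)).to₂
  refine (nat_rec₁ [[]] step).of_eq fun n => ?_
  induction n with
  | zero => rfl
  | succ n ih => simp only [allStrings, ← ih]

lemma length_filter_le_add {α : Type*} (l : List α) {p q r : α → Bool}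
    (h : ∀ x ∈ l, p x → q x ∨ r x) :
    (l.filter p).length ≤ (l.filter q).length + (l.filter r).length := by
  induction l with
  | nil => simp
  | cons a l ih =>
    have := h a List.mem_cons_self
    have ih := ih fun x hx => h x (List.mem_cons_of_mem a hx)
    simp only [List.filter_cons]
    split_ifs <;> simp_all <;> omega

lemma exists_pow_le_two_pow_sub_div {q : ℝ} (hq0 : 0 ≤ q) (hq2 : q < 2) :
    ∃ M : ℕ, 0 < M ∧ ∀ n, q ^ n ≤ 2 ^ (n - n / M) := by
  obtain ⟨M, hM⟩ := exists_pow_lt_of_lt_one (by norm_num : (0 : ℝ) < 1 / 2)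
    (by linarith : q / 2 < 1)
  refine ⟨M, Nat.pos_of_ne_zero fun h => by norm_num [h] at hM, fun n => ?_⟩
  calc q ^ n = 2 ^ n * (q / 2) ^ n := by rw [← mul_pow]; ring_nf
    _ ≤ 2 ^ n * ((q / 2) ^ M) ^ (n / M) := by
        rw [← pow_mul]
        exact mul_le_mul_of_nonneg_left
          (pow_le_pow_of_le_one (by positivity) (by linarith) (Nat.mul_div_le n M)) (by positivity)
    _ ≤ 2 ^ n * (1 / 2) ^ (n / M) := by gcongr
    _ = 2 ^ (n - n / M) := by
        rw [one_div_pow, ← div_eq_mul_one_div]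
        exact (pow_sub₀ _ two_ne_zero (Nat.div_le_self n M)).symm

/-- Some bit of `x` has frequency at least `1/2 + 1/(2m)`. -/
def IsDeviant (m : ℕ) (x : List Bool) : Prop := ∃ b, x.length * (m + 1) ≤ 2 * m * x.count b

instance (m : ℕ) : DecidablePred (IsDeviant m) := fun _ => inferInstanceAs (Decidable (∃ _, _))

def deviants (m n : ℕ) : List (List Bool) := (allStrings n).filter (IsDeviant m ·)

open Primrec in
lemma primrec_count (b : Bool) : Primrec fun x : List Bool => x.count b :=
  (list_length.comp (listFilter (Primrec.eq.comp .id (const b)))).of_eq fun x => by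
    simp [List.count_eq_length_filter, Bool.beq_eq_decide_eq]

open Primrec in
lemma primrec_deviants (m : ℕ) : Primrec (deviants m) := by
  have hdev : PrimrecPred (IsDeviant m) := by
    refine (PrimrecPred.or
      (nat_le.comp (nat_mul.comp list_length (const (m + 1)))
        (nat_mul.comp (const (2 * m)) (primrec_count false)))
      (nat_le.comp (nat_mul.comp list_length (const (m + 1)))
        (nat_mul.comp (const (2 * m)) (primrec_count true)))).of_eq fun x => ?_
    simp [IsDeviant]
  exact (listFilter hdev).comp primrec_allStrings

theorem exists_length_deviants_le {m : ℕ} (hm : 0 < m) :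
    ∃ M : ℕ, 0 < M ∧ ∀ n, (deviants m n).length ≤ 2 ^ (n + 1 - n / M) := by
  set a : ℝ := (m + 1) / (2 * m)
  have ha : 1 / 2 < a := by
    rw [lt_div_iff₀ (by positivity)]; linarith
  obtain ⟨q, hq0, hq2, hq⟩ := exists_length_filter_le_pow ha
  obtain ⟨M, hM, hqM⟩ := exists_pow_le_two_pow_sub_div hq0 hq2
  refine ⟨M, hM, fun n => ?_⟩
  have hsplit := length_filter_le_add (allStrings n)
    (p := fun x => decide (IsDeviant m x))
    (q := fun x => decide (a * n ≤ x.count true))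
    (r := fun x => decide (a * n ≤ x.count false)) fun x hx hdev => by
      obtain ⟨b, hb⟩ := of_decide_eq_true hdev
      rw [mem_allStrings.1 hx] at hb
      have : a * n ≤ x.count b := by
        rw [div_mul_eq_mul_div, div_le_iff₀ (by positivity)]
        exact_mod_cast (by linarith [hb] : (m + 1) * n ≤ x.count b * (2 * m))
      cases b <;> simp [this]
  have : ((deviants m n).length : ℝ) ≤ 2 ^ (n + 1 - n / M) := by
    calc ((deviants m n).length : ℝ) ≤ q ^ n + q ^ n := by
          refine (Nat.cast_le.2 hsplit).trans ?_
          push_cast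
          exact add_le_add (hq true n) (hq false n)
      _ ≤ 2 ^ (n - n / M) + 2 ^ (n - n / M) := add_le_add (hqM n) (hqM n)
      _ = 2 ^ (n + 1 - n / M) := by
          rw [← two_mul, ← pow_succ', Nat.sub_add_comm (Nat.div_le_self n M)]
  exact_mod_cast this

lemma abs_count_true_div_sub_half_lt {m : ℕ} (hm : 0 < m) {x : List Bool} (hx : 0 < x.length)
    (h : ¬ IsDeviant m x) : |(x.count true : ℝ) / x.length - 1 / 2| < 1 / (2 * m) := by
  simp only [IsDeviant, not_exists, not_le] at h
  have htrue : 2 * (m : ℝ) * x.count true < x.length * (m + 1) := by exact_mod_cast h true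
  have hfalse : 2 * (m : ℝ) * x.count false < x.length * (m + 1) := by exact_mod_cast h false
  have hsum : (x.count true : ℝ) + x.count false = x.length := by
    exact_mod_cast List.count_true_add_count_false x
  have hn : (0 : ℝ) < x.length := by exact_mod_cast hx
  have hm' : (0 : ℝ) < m := by exact_mod_cast hm
  rw [abs_sub_lt_iff, div_sub' hn.ne', sub_div' hn.ne', div_lt_div_iff₀ hn (by positivity),
    div_lt_div_iff₀ hn (by positivity)]
  constructor <;> nlinarith

theorem tendsto_count_true_div_of_eventually_not_isDeviant {x : ℕ → List Bool}
    (hlen : ∀ n, (x n).length = n) (h : ∀ m, 0 < m → ∀ᶠ n in atTop, ¬ IsDeviant m (x n)) :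
    Tendsto (fun n => ((x n).count true : ℝ) / n) atTop (nhds (1 / 2)) := by
  refine Metric.tendsto_nhds.2 fun ε hε => ?_
  obtain ⟨m, hm⟩ := exists_nat_one_div_lt hε
  filter_upwards [h (m + 1) m.succ_pos, eventually_gt_atTop 0] with n hdev hn
  have hlt := abs_count_true_div_sub_half_lt m.succ_pos (by rwa [hlen]) hdev
  rw [hlen] at hlt
  rw [Real.dist_eq]
  refine hlt.trans (lt_of_le_of_lt ?_ hm)
  push_cast
  gcongr
  linarith

section Decoder

variable (D : ℕ → List (List Bool)) (L : ℕ → ℕ)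

/-- The program `1ᵏ 0 n i` with `n` written in `k` bits and `i` in `L n` bits; the decoder reads it
as the `i`-th string of `D n`. The unary header makes the set of programs prefix-free. -/
def program (k n i : ℕ) : List Bool :=
  List.replicate k true ++ false :: (toBits k n ++ toBits (L n) i)

def header (p : List Bool) : ℕ := (p.takeWhile id).length

def argument (p : List Bool) : ℕ := ofBits ((p.drop (header p + 1)).take (header p))

def IsProgram (p : List Bool) : Prop := p.length = 2 * header p + 1 + L (argument p)

def output (p : List Bool) : List Bool :=
  (D (argument p)).getD (ofBits (p.drop (2 * header p + 1))) []

def Decoder (p x : List Bool) : Prop := ∃ q, q <+: p ∧ IsProgram L q ∧ x <+: output D q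

variable {D L}

lemma header_append {q : List Bool} (hq : IsProgram L q) (e : List Bool) :
    header (q ++ e) = header q := by
  have hlt : header q < q.length := by rw [hq]; omega
  rw [header, List.takeWhile_append, if_neg (show (q.takeWhile id).length ≠ q.length from hlt.ne)]
  rfl

lemma argument_append {q : List Bool} (hq : IsProgram L q) (e : List Bool) :
    argument (q ++ e) = argument q := by
  have hle : header q + 1 + header q ≤ q.length := by rw [hq]; omega
  rw [argument, argument, header_append hq, List.drop_append_of_le_length (by omega),
    List.take_append_of_le_length (by simp; omega)]

lemma IsProgram.eq_of_prefix {q p : List Bool} (hq : IsProgram L q) (hp : IsProgram L p)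
    (h : q <+: p) : q = p := by
  obtain ⟨e, rfl⟩ := h
  have hlen := hp
  rw [IsProgram, header_append hq, argument_append hq, List.length_append, ← hq] at hlen
  simp [List.length_eq_zero_iff.1 (by omega : e.length = 0)]

lemma program_eq_append (k n i : ℕ) : program L k n i =
    (List.replicate k true ++ [false]) ++ toBits k n ++ toBits (L n) i := by
  simp [program]

lemma header_program (k n i : ℕ) : header (program L k n i) = k := by
  simp [header, program]

lemma argument_program {k n : ℕ} (i : ℕ) (hn : n < 2 ^ k) : argument (program L k n i) = n := by
  rw [argument, header_program, program_eq_append, List.append_assoc,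
    List.drop_left' (by simp), List.take_left' (by simp), ofBits_toBits hn]

lemma length_program (k n i : ℕ) : (program L k n i).length = 2 * k + 1 + L n := by
  simp [program]
  omega

lemma isProgram_program {k n : ℕ} (i : ℕ) (hn : n < 2 ^ k) : IsProgram L (program L k n i) := by
  rw [IsProgram, header_program, argument_program i hn, length_program]

lemma output_program {k n i : ℕ} (hn : n < 2 ^ k) (hi : i < (D n).length)
    (hDL : (D n).length ≤ 2 ^ L n) : output D (program L k n i) = (D n)[i] := by
  rw [output, header_program, argument_program i hn, program_eq_append,
    List.drop_left' (by simp; omega), ofBits_toBits (hi.trans_le hDL), List.getD_eq_getElem]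

lemma decoder_iff {p x : List Bool} : Decoder D L p x ↔
    ∃ j ∈ List.range (p.length + 1),
      IsProgram L (p.take j) ∧ (output D (p.take j)).take x.length = x := by
  constructor
  · rintro ⟨q, hq, hprog, hx⟩
    refine ⟨q.length, List.mem_range.2 (Nat.lt_succ_of_le hq.length_le), ?_⟩
    rw [← List.prefix_iff_eq_take.1 hq]
    exact ⟨hprog, (List.prefix_iff_eq_take.1 hx).symm⟩
  · rintro ⟨j, -, hprog, hx⟩
    exact ⟨p.take j, List.take_prefix j p, hprog, List.prefix_iff_eq_take.2 hx.symm⟩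

section Computability

open Primrec

lemma primrec_ofBits : Primrec ofBits :=
  list_foldr .id (const 0)
    (Primrec.cond (fst.comp snd) (nat_double_succ.comp (snd.comp snd))
      (nat_double.comp (snd.comp snd))).to₂

lemma primrec_header : Primrec header := list_length.comp (list_takeWhile .id)

lemma primrec_argument : Primrec argument :=
  primrec_ofBits.comp
    (list_take.comp primrec_header (list_drop.comp (succ.comp primrec_header) .id))

lemma primrecPred_isProgram (hL : Primrec L) : PrimrecPred (IsProgram L) :=
  Primrec.eq.comp list_length
    (nat_add.comp (nat_double_succ.comp primrec_header) (hL.comp primrec_argument))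

lemma primrec_output (hD : Primrec D) : Primrec (output D) :=
  (list_getD []).comp (hD.comp primrec_argument)
    (primrec_ofBits.comp (list_drop.comp (nat_double_succ.comp primrec_header) .id))

lemma rePred_decoder (hD : Primrec D) (hL : Primrec L) :
    REPred fun q : List Bool × List Bool => Decoder D L q.1 q.2 := by
  have hprefix : PrimrecRel fun (j : ℕ) (q : List Bool × List Bool) =>
      IsProgram L (q.1.take j) ∧ (output D (q.1.take j)).take q.2.length = q.2 :=
    ((primrecPred_isProgram hL).comp (list_take.comp fst (fst.comp snd))).and
      (Primrec.eq.comp (list_take.comp (list_length.comp (snd.comp snd))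
        ((primrec_output hD).comp (list_take.comp fst (fst.comp snd)))) (snd.comp snd))
  have hre := (hprefix.exists_mem_list.comp (list_range.comp (succ.comp (list_length.comp fst)))
    .id).computablePred.to_re
  exact hre.of_eq fun _ => decoder_iff.symm

end Computability

theorem monotoneRepr_decoder (hD : Primrec D) (hL : Primrec L) : MonotoneRepr (Decoder D L) := by
  refine ⟨rePred_decoder hD hL, ?_, ?_⟩
  · rintro p x p' x' ⟨q, hq, hprog, hx⟩ ⟨q', hq', hprog', hx'⟩ hpp
    obtain rfl : q = q' := by
      rcases List.prefix_or_prefix_of_prefix (hq.trans hpp) hq' with h | h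
      exacts [hprog.eq_of_prefix hprog' h, (hprog'.eq_of_prefix hprog h).symm]
    exact List.prefix_or_prefix_of_prefix hx hx'
  · rintro p x x' ⟨q, hq, hprog, hx⟩ hxx
    exact ⟨q, hq, hprog, hxx.trans hx⟩

theorem exists_kmR_le_of_length_le {R : List Bool → List Bool → Prop} (hR : MonotoneOptimal R)
    (hD : Primrec D) (hL : Primrec L) (hDL : ∀ n, (D n).length ≤ 2 ^ L n) :
    ∃ c : ℕ, ∀ n k x, n < 2 ^ k → x ∈ D n → KmR R x ≤ L n + 2 * k + c := by
  obtain ⟨c, hc⟩ := hR.2 _ (monotoneRepr_decoder hD hL)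
  refine ⟨c + 1, fun n k x hn hx => ?_⟩
  obtain ⟨i, hi, rfl⟩ := List.getElem_of_mem hx
  have := hc _ (program L k n i) ⟨_, List.prefix_refl _, isProgram_program i hn,
    by rw [output_program hn hi (hDL n)]⟩
  rw [length_program] at this
  omega

end Decoder

lemma isLittleO_natLog_two :
    (fun n : ℕ => (Nat.log 2 n : ℝ)) =o[atTop] fun n => (n : ℝ) := by
  have hlog := (Real.isLittleO_log_id_atTop.comp_tendsto tendsto_natCast_atTop_atTop).const_mul_left
    (Real.log 2)⁻¹
  refine IsBigO.trans_isLittleO (IsBigO.of_bound 1 (Eventually.of_forall fun n => ?_)) hlog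
  have := Real.natLog_le_logb n 2
  rw [Real.logb, Nat.cast_ofNat] at this
  rw [Real.norm_of_nonneg (Nat.cast_nonneg _), one_mul]
  exact this.trans ((div_eq_inv_mul _ _).le.trans (Real.le_norm_self _))

lemma eventually_lt_div_of_isLittleO {f : ℕ → ℕ}
    (hf : (fun n => (f n : ℝ)) =o[atTop] fun n => (n : ℝ)) {M : ℕ} (hM : 0 < M) :
    ∀ᶠ n in atTop, f n < n / M := by
  have hconst : (fun _ : ℕ => (1 : ℝ)) =o[atTop] fun n => (n : ℝ) :=
    (isLittleO_const_id_atTop 1).comp_tendsto tendsto_natCast_atTop_atTop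
  filter_upwards [(hf.add hconst).def (by positivity : (0 : ℝ) < 1 / M)] with n hn
  rw [Real.norm_eq_abs, Real.norm_eq_abs, abs_of_nonneg (by positivity),
    abs_of_nonneg (by positivity)] at hn
  rw [Nat.lt_iff_add_one_le, Nat.le_div_iff_mul_le hM]
  have : ((f n : ℝ) + 1) * M ≤ n := by
    rwa [← le_div_iff₀ (by positivity), div_eq_mul_inv, mul_comm, ← one_div]
  exact_mod_cast this

theorem eventually_not_isDeviant_pref {R : List Bool → List Bool → Prop} (hR : MonotoneOptimal R)
    {ρ : ℕ → ℕ} (hρo : (fun n => (ρ n : ℝ)) =o[atTop] fun n => (n : ℝ)) {ω : ℕ → Bool} {c : ℕ}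
    (hc : ∀ n : ℕ, (n : ℤ) - (ρ n : ℤ) - (c : ℤ) ≤ (KmR R (pref ω n) : ℤ)) {m : ℕ} (hm : 0 < m) :
    ∀ᶠ n in atTop, ¬ IsDeviant m (pref ω n) := by
  obtain ⟨M, hM, hlen⟩ := exists_length_deviants_le hm
  obtain ⟨c', hc'⟩ := exists_kmR_le_of_length_le hR (L := fun n => n + 1 - n / M)
    (primrec_deviants m)
    (Primrec.nat_sub.comp .succ (Primrec.nat_div.comp .id (.const M))) hlen
  have hsmall : (fun n => ((ρ n + 2 * Nat.log 2 n + (c + c' + 3) : ℕ) : ℝ)) =o[atTop]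
      fun n => (n : ℝ) := by
    push_cast
    exact (hρo.add (isLittleO_natLog_two.const_mul_left 2)).add
      ((isLittleO_const_id_atTop _).comp_tendsto tendsto_natCast_atTop_atTop)
  filter_upwards [eventually_lt_div_of_isLittleO hsmall hM] with n hn hdev
  have hmem : pref ω n ∈ deviants m n :=
    List.mem_filter.2 ⟨mem_allStrings.2 (by simp [pref]), decide_eq_true hdev⟩
  have hupper := hc' n (Nat.log 2 n + 1) _ (Nat.lt_pow_succ_log_self one_lt_two n) hmem
  have hlower := hc n
  have := Nat.div_le_self n M
  omega

end SLLN

open SLLN in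
theorem stmt_11_general (R : List Bool → List Bool → Prop) (hR : MonotoneOptimal R)
    (ρ : ℕ → ℕ)
    (hρo : (fun n => (ρ n : ℝ)) =o[atTop] fun n => (n : ℝ))
    (ω : ℕ → Bool)
    (hω : ∃ c : ℕ, ∀ n : ℕ, (n : ℤ) - (ρ n : ℤ) - (c : ℤ) ≤ (KmR R (pref ω n) : ℤ)) :
    Tendsto (fun n => ((pref ω n).count true : ℝ) / n) atTop (nhds (1 / 2)) := by
  obtain ⟨c, hc⟩ := hω
  exact tendsto_count_true_div_of_eventually_not_isDeviant (fun n => by simp [pref])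
    fun m hm => eventually_not_isDeviant_pref hR hρo hc hm

/-- if `ρ` is computable, unbounded, nondecreasing with `ρ(n) = o(n)`, then every
`ω` with `Km(ω^n) ≥ n - ρ(n) - O(1)` satisfies the strong law of large numbers. -/
theorem stmt_11 (R : List Bool → List Bool → Prop) (hR : MonotoneOptimal R)
    (ρ : ℕ → ℕ) (hρc : Computable ρ) (hρm : Monotone ρ) (hρu : ∀ c : ℕ, ∃ n, c < ρ n)
    (hρo : (fun n => (ρ n : ℝ)) =o[atTop] fun n => (n : ℝ))
    (ω : ℕ → Bool)
    (hω : ∃ c : ℕ, ∀ n : ℕ, (n : ℤ) - (ρ n : ℤ) - (c : ℤ) ≤ (KmR R (pref ω n) : ℤ)) :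
    Tendsto (fun n => ((pref ω n).count true : ℝ) / n) atTop (nhds (1 / 2)) :=
  stmt_11_general R hR ρ hρo ω hω
end

section
/- Let L be the uniform Bernoulli measure on {0,1}^∞ and S_k = ∑_{i=1}^k ω_i. For every m ≥ 1 and every real a, L{ω : max_{1≤k≤m} (S_k − k/2) > a} ≤ 2·L{ω : S_m − m/2 > a}. -/
open MeasureTheory Filter Asymptotics
open scoped ENNReal

/-- `S_k(ω) = ∑_{i=1}^k ω_i`, the number of ones among the first `k` bits. -/
def S (ω : ℕ → Bool) (k : ℕ) : ℕ := (pref ω k).count true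

/-!
Only the first `m` bits matter, and each of the `2^m` strings of length `m` has measure `2^-m`,
so this is a counting statement about the centred walk with `±1/2` steps. Reflecting a path after
its first passage above `a` keeps that first passage time, so it is an involution of the paths
that pass above `a`, and it sends those ending at most `a` to paths ending above `a`
(the endpoint `x` becomes `2 w - x > a` where `w > a` is the value at the first passage).
Hence the passing paths are at most twice as many as those ending above `a`.
-/

open Finset

namespace FairCoin

def restrict (m : ℕ) (ω : ℕ → Bool) : Fin m → Bool := fun i => ω i

lemma pref_eq_ofFn_restrict (ω : ℕ → Bool) (m : ℕ) : pref ω m = List.ofFn (restrict m ω) := by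
  rw [List.ofFn_eq_map, pref, ← List.map_coe_finRange_eq_range, List.map_map]; rfl

lemma cyl_ofFn {m : ℕ} (f : Fin m → Bool) : Cyl (List.ofFn f) = restrict m ⁻¹' {f} := by
  ext ω
  simp [Cyl, PrefixOf, pref_eq_ofFn_restrict, List.ofFn_inj]

lemma measure_restrict_preimage {μ : Measure (ℕ → Bool)}
    (hμ : ∀ x : List Bool, μ (Cyl x) = (2 : ℝ≥0∞)⁻¹ ^ x.length) {m : ℕ}
    (T : Finset (Fin m → Bool)) : μ (restrict m ⁻¹' T) = #T * (2 : ℝ≥0∞)⁻¹ ^ m := by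
  have hmeas : Measurable (restrict m) := measurable_pi_lambda _ fun i => measurable_pi_apply _
  rw [← Set.biUnion_preimage_singleton, Finset.set_biUnion_coe, measure_biUnion_finset
    (fun f _ g _ hfg => Set.disjoint_singleton.2 hfg |>.preimage _)
    (fun f _ => hmeas (measurableSet_singleton f))]
  simp [← cyl_ofFn, hμ]

noncomputable def step (b : Bool) : ℝ := if b then 1 / 2 else -(1 / 2)

noncomputable def walk {m : ℕ} (f : Fin m → Bool) (k : ℕ) : ℝ := ∑ i with i.1 < k, step (f i)

lemma S_sub_half_eq_sum (ω : ℕ → Bool) (k : ℕ) :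
    (S ω k : ℝ) - k / 2 = ∑ i ∈ range k, step (ω i) := by
  induction k with
  | zero => simp [S, pref]
  | succ k ih =>
    have hS : S ω (k + 1) = S ω k + (ω k).toNat := by
      rw [S, S, pref, pref, List.range_succ, List.map_append, List.map_cons, List.map_nil,
        List.count_append]
      cases ω k <;> rfl
    rw [sum_range_succ, ← ih, hS]
    cases ω k <;> simp [step] <;> ring

lemma S_sub_half_eq_walk (ω : ℕ → Bool) {k m : ℕ} (hk : k ≤ m) :
    (S ω k : ℝ) - k / 2 = walk (restrict m ω) k := by
  simp only [S_sub_half_eq_sum, walk, restrict, sum_filter]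
  rw [Fin.sum_univ_eq_sum_range (fun i => if i < k then step (ω i) else 0), ← sum_filter]
  congr 1
  ext i
  simp only [mem_range, mem_filter]
  omega

section Reflection

variable {m : ℕ}

def reflect (k : ℕ) (f : Fin m → Bool) : Fin m → Bool := fun i => if i.1 < k then f i else !f i

lemma reflect_reflect (k : ℕ) (f : Fin m → Bool) : reflect k (reflect k f) = f := by
  funext i
  by_cases hi : i.1 < k <;> simp [reflect, hi]

lemma walk_reflect_of_le {j k : ℕ} (hjk : j ≤ k) (f : Fin m → Bool) :
    walk (reflect k f) j = walk f j :=
  sum_congr rfl fun i hi => by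
    rw [reflect, if_pos (lt_of_lt_of_le (mem_filter.1 hi).2 hjk)]

lemma walk_reflect (k : ℕ) (f : Fin m → Bool) :
    walk (reflect k f) m = 2 * walk f k - walk f m := by
  have hsplit : ∀ g : Fin m → Bool, walk g m =
      walk g k + ∑ i with ¬i.1 < k, step (g i) := fun g => by
    rw [walk, walk, filter_true_of_mem fun i _ => i.2, sum_filter_add_sum_filter_not]
  have htail : ∑ i with ¬i.1 < k, step (reflect k f i) = -∑ i with ¬i.1 < k, step (f i) := by
    rw [← sum_neg_distrib]
    refine sum_congr rfl fun i hi => ?_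
    rw [reflect, if_neg (mem_filter.1 hi).2]
    cases f i <;> simp [step]
  linarith [hsplit f, hsplit (reflect k f), walk_reflect_of_le (le_refl k) f]

end Reflection

section FirstPassage

variable {m : ℕ} (a : ℝ)

def passageTimes (f : Fin m → Bool) : Set ℕ := {k | 1 ≤ k ∧ k ≤ m ∧ a < walk f k}

/-- This is `sInf ∅ = 0` when the walk never passes above `a`. -/
noncomputable def firstPassage (f : Fin m → Bool) : ℕ := sInf (passageTimes a f)

lemma mem_passageTimes_reflect_iff {f : Fin m → Bool} {j k : ℕ} (hjk : j ≤ k) :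
    j ∈ passageTimes a (reflect k f) ↔ j ∈ passageTimes a f := by
  simp only [passageTimes, Set.mem_ofPred_eq, walk_reflect_of_le hjk]

lemma firstPassage_reflect {f : Fin m → Bool} (hf : (passageTimes a f).Nonempty) :
    firstPassage a (reflect (firstPassage a f) f) = firstPassage a f := by
  set τ := firstPassage a f
  have hτ : τ ∈ passageTimes a (reflect τ f) :=
    (mem_passageTimes_reflect_iff a le_rfl).2 (Nat.sInf_mem hf)
  refine le_antisymm (Nat.sInf_le hτ) (Nat.sInf_le ?_)
  exact (mem_passageTimes_reflect_iff a (Nat.sInf_le hτ)).1 (Nat.sInf_mem ⟨τ, hτ⟩)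

open Classical in
theorem card_passage_le_two_mul_card :
    #{f : Fin m → Bool | (passageTimes a f).Nonempty} ≤
      2 * #{f : Fin m → Bool | a < walk f m} := by
  set Φ : (Fin m → Bool) → Fin m → Bool := fun f => reflect (firstPassage a f) f
  have hΦΦ : ∀ f, (passageTimes a f).Nonempty → Φ (Φ f) = f := fun f hf => by
    simp only [Φ, firstPassage_reflect a hf, reflect_reflect]
  rw [← card_filter_add_card_filter_not (p := fun f => a < walk f m), two_mul]
  refine add_le_add (card_le_card fun f hf => ?_) (card_le_card_of_injOn Φ ?_ ?_)
  · simp only [mem_filter, mem_univ, true_and] at hf ⊢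
    exact hf.2
  · intro f hf
    simp only [mem_coe, mem_filter, mem_univ, true_and, not_lt] at hf ⊢
    have hτ : a < walk f (firstPassage a f) := (Nat.sInf_mem hf.1).2.2
    rw [walk_reflect]
    linarith [hf.2]
  · intro f hf g hg hfg
    simp only [mem_coe, mem_filter, mem_univ, true_and] at hf hg
    rw [← hΦΦ f hf.1, ← hΦΦ g hg.1, hfg]

end FirstPassage

end FairCoin

open FairCoin in
theorem stmt_14_general (μ : Measure (ℕ → Bool))
    (hμ : ∀ x : List Bool, μ (Cyl x) = (2 : ℝ≥0∞)⁻¹ ^ x.length)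
    (m : ℕ) (a : ℝ) :
    μ {ω : ℕ → Bool | ∃ k : ℕ, 1 ≤ k ∧ k ≤ m ∧ (S ω k : ℝ) - k / 2 > a} ≤
      2 * μ {ω : ℕ → Bool | (S ω m : ℝ) - m / 2 > a} := by
  classical
  have hmax : {ω : ℕ → Bool | ∃ k : ℕ, 1 ≤ k ∧ k ≤ m ∧ (S ω k : ℝ) - k / 2 > a} =
      restrict m ⁻¹' {f | (passageTimes a f).Nonempty} := by
    ext ω
    simp only [Set.mem_ofPred_eq, Set.mem_preimage, passageTimes, Set.Nonempty]
    refine exists_congr fun k => and_congr_right fun _ => and_congr_right fun hk => ?_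
    rw [S_sub_half_eq_walk ω hk, gt_iff_lt]
  have hend : {ω : ℕ → Bool | (S ω m : ℝ) - m / 2 > a} =
      restrict m ⁻¹' {f | a < walk f m} := by
    ext ω
    rw [Set.mem_ofPred_eq, S_sub_half_eq_walk ω le_rfl]
    rfl
  rw [hmax, hend, ← coe_filter_univ, ← coe_filter_univ, measure_restrict_preimage hμ,
    measure_restrict_preimage hμ, ← mul_assoc]
  gcongr
  exact_mod_cast card_passage_le_two_mul_card a

/-- reflection/maximal inequality
`L{max_{1≤k≤m}(S_k - k/2) > a} ≤ 2·L{S_m - m/2 > a}` for the fair-coin measure. -/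
theorem stmt_14 (μ : Measure (ℕ → Bool))
    (hμ : ∀ x : List Bool, μ (Cyl x) = (2 : ℝ≥0∞)⁻¹ ^ x.length)
    (m : ℕ) (hm : 1 ≤ m) (a : ℝ) :
    μ {ω : ℕ → Bool | ∃ k : ℕ, 1 ≤ k ∧ k ≤ m ∧ (S ω k : ℝ) - k / 2 > a} ≤
      2 * μ {ω : ℕ → Bool | (S ω m : ℝ) - m / 2 > a} :=
  stmt_14_general μ hμ m a
end
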